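/- Block encoding of a banded circulant matrix via multi-controlled rotations (the construction of Camps et al.): let a₀ ∈ (0, 2] and a₁, a₋₁ ∈ [−1, 1], let A = a₀·I_N + a₁·S₊ + a₋₁·S₋, and set θ₀ = 2·arccos(a₀ − 1), θ₁ = 2·arccos(a₁), θ₂ = 2·arccos(a₋₁). On ℂ² ⊗ ℂ² ⊗ ℂ² ⊗ ℂ^N (ancilla qubits a, ℓ₀, ℓ₁ first, system register last) define R₀ = RY(θ₀) ⊗ (P₀ ⊗ P₀) ⊗ I_N + I₂ ⊗ (I₄ − P₀ ⊗ P₀) ⊗ I_N, R₁ = RY(θ₁) ⊗ (P₁ ⊗ P₀) ⊗ I_N + I₂ ⊗ (I₄ − P₁ ⊗ P₀) ⊗ I_N, R₂ = RY(θ₂) ⊗ (P₀ ⊗ P₁) ⊗ I_N + I₂ ⊗ (I₄ − P₀ ⊗ P₁) ⊗ I_N, C₋ = I₂ ⊗ I₂ ⊗ P₁ ⊗ S₋ + I₂ ⊗ I₂ ⊗ P₀ ⊗ I_N, C₊ = I₂ ⊗ P₁ ⊗ I₂ ⊗ S₊ + I₂ ⊗ P₀ ⊗ I₂ ⊗ I_N,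 and U = (I₂ ⊗ H ⊗ H ⊗ I_N) · C₊ · C₋ · R₂ · R₁ · R₀ · (I₂ ⊗ H ⊗ H ⊗ I_N). Then U block-encodes A with sub-normalization factor 1/4: for all j, k ∈ Fin N, U((0,0,0,j),(0,0,0,k)) = (1/4)·A_{jk}. -/

import Mathlib

/-
The label register (ℓ₀, ℓ₁), put into the uniform superposition by `H ⊗ H`, selects one of four
branches of the circuit: on `|00⟩` the ancilla is rotated so that its `⟨0|·|0⟩` amplitude is
`a₀ - 1`; on `|10⟩` it is `a₁` and `S₊` is applied; on `|01⟩` it is `a₋₁` and `S₋` is applied;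
on `|11⟩` the ancilla is untouched and both shifts act, cancelling to `I`. Projecting back onto
ancilla and labels `|000⟩` averages the branches with weight `1/4`, giving
`((a₀ - 1) I + a₁ S₊ + a₋₁ S₋ + I) / 4 = A / 4`.
-/

open Matrix Kronecker

noncomputable section

/-- Cyclic shift matrix `S₊`: `(S₊)_{jk} = 1` iff `j ≡ k+1 (mod N)`. -/
def Sp (N : ℕ) [NeZero N] : Matrix (Fin N) (Fin N) ℂ :=
  Matrix.of fun j k => if j = k + 1 then 1 else 0

/-- Cyclic shift matrix `S₋ = S₊ᵀ`. -/
def Sm (N : ℕ) [NeZero N] : Matrix (Fin N) (Fin N) ℂ := (Sp N)ᵀ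

def P0 : Matrix (Fin 2) (Fin 2) ℂ := !![1, 0; 0, 0]
def P1 : Matrix (Fin 2) (Fin 2) ℂ := !![0, 0; 0, 1]
def Hg : Matrix (Fin 2) (Fin 2) ℂ := ((Real.sqrt 2 : ℝ) : ℂ)⁻¹ • !![1, 1; 1, -1]

/-- `RY(θ) = [[cos(θ/2), −sin(θ/2)], [sin(θ/2), cos(θ/2)]]`. -/
def RYm (θ : ℝ) : Matrix (Fin 2) (Fin 2) ℂ :=
  !![(Real.cos (θ / 2) : ℂ), -(Real.sin (θ / 2) : ℂ);
     (Real.sin (θ / 2) : ℂ), (Real.cos (θ / 2) : ℂ)]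

lemma Sp_mul_Sm (N : ℕ) [NeZero N] : Sp N * Sm N = 1 := by
  ext j k
  have h : ∀ i l : Fin N, i = l + 1 ↔ l = i - 1 := fun i l => by rw [eq_sub_iff_add_eq, eq_comm]
  simp [Sp, Sm, Matrix.mul_apply, Matrix.one_apply, h, eq_comm]

lemma P0_mul_P0 : P0 * P0 = P0 := by
  ext i j; fin_cases i <;> fin_cases j <;> simp [P0, Matrix.mul_apply]

lemma P0_mul_P1 : P0 * P1 = 0 := by
  ext i j; fin_cases i <;> fin_cases j <;> simp [P0, P1, Matrix.mul_apply]

lemma P1_mul_P0 : P1 * P0 = 0 := by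
  ext i j; fin_cases i <;> fin_cases j <;> simp [P0, P1, Matrix.mul_apply]

lemma P1_mul_P1 : P1 * P1 = P1 := by
  ext i j; fin_cases i <;> fin_cases j <;> simp [P1, Matrix.mul_apply]

lemma P0_add_P1 : P0 + P1 = 1 := by
  ext i j; fin_cases i <;> fin_cases j <;> simp [P0, P1]

lemma one_eq_sum_P_kronecker_P : (1 : Matrix (Fin 2 × Fin 2) (Fin 2 × Fin 2) ℂ)
    = P0 ⊗ₖ P0 + P0 ⊗ₖ P1 + P1 ⊗ₖ P0 + P1 ⊗ₖ P1 := by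
  rw [← Matrix.one_kronecker_one, ← P0_add_P1]
  simp only [Matrix.add_kronecker, Matrix.kronecker_add]
  abel

lemma ofReal_sqrt_two_inv_mul_self : ((√2 : ℝ) : ℂ)⁻¹ * ((√2 : ℝ) : ℂ)⁻¹ = 2⁻¹ := by
  rw [← mul_inv, ← Complex.ofReal_mul, Real.mul_self_sqrt zero_le_two]
  norm_num

lemma Hg_mul_P0_mul_Hg_zero_zero : (Hg * P0 * Hg) 0 0 = 2⁻¹ := by
  simp [Hg, P0, Matrix.mul_apply, ofReal_sqrt_two_inv_mul_self]

lemma Hg_mul_P1_mul_Hg_zero_zero : (Hg * P1 * Hg) 0 0 = 2⁻¹ := by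
  simp [Hg, P1, Matrix.mul_apply, ofReal_sqrt_two_inv_mul_self]

lemma RYm_two_mul_arccos_zero_zero {x : ℝ} (h₁ : -1 ≤ x) (h₂ : x ≤ 1) :
    RYm (2 * Real.arccos x) 0 0 = x := by
  simp [RYm, Real.cos_arccos h₁ h₂]

lemma kronecker_conj_kronecker_apply {n : Type*} [Fintype n] [DecidableEq n]
    (V X P Q : Matrix (Fin 2) (Fin 2) ℂ) (Y : Matrix n n ℂ) (a b c a' b' c' : Fin 2) (j k : n) :
    (((1 : Matrix (Fin 2) (Fin 2) ℂ) ⊗ₖ (V ⊗ₖ V) ⊗ₖ (1 : Matrix n n ℂ))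
      * (X ⊗ₖ (P ⊗ₖ Q) ⊗ₖ Y)
      * ((1 : Matrix (Fin 2) (Fin 2) ℂ) ⊗ₖ (V ⊗ₖ V) ⊗ₖ (1 : Matrix n n ℂ)))
        ((a, (b, c)), j) ((a', (b', c')), k)
      = X a a' * ((V * P * V) b b' * (V * Q * V) c c') * Y j k := by
  simp only [← Matrix.mul_kronecker_mul, Matrix.one_mul, Matrix.mul_one, Matrix.kroneckerMap_apply]

section Circuit

variable (N : ℕ) [NeZero N]

def ctrlRY (θ : ℝ) (P Q : Matrix (Fin 2) (Fin 2) ℂ) :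
    Matrix ((Fin 2 × (Fin 2 × Fin 2)) × Fin N) ((Fin 2 × (Fin 2 × Fin 2)) × Fin N) ℂ :=
  RYm θ ⊗ₖ (P ⊗ₖ Q) ⊗ₖ (1 : Matrix (Fin N) (Fin N) ℂ)
    + (1 : Matrix (Fin 2) (Fin 2) ℂ) ⊗ₖ (1 - P ⊗ₖ Q) ⊗ₖ (1 : Matrix (Fin N) (Fin N) ℂ)

lemma shifts_mul_ctrlRY_eq_sum_branches (θ0 θ1 θ2 : ℝ) :
    ((1 : Matrix (Fin 2) (Fin 2) ℂ) ⊗ₖ (P1 ⊗ₖ (1 : Matrix (Fin 2) (Fin 2) ℂ)) ⊗ₖ Sp N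
      + (1 : Matrix (Fin 2) (Fin 2) ℂ) ⊗ₖ (P0 ⊗ₖ (1 : Matrix (Fin 2) (Fin 2) ℂ))
        ⊗ₖ (1 : Matrix (Fin N) (Fin N) ℂ))
    * ((1 : Matrix (Fin 2) (Fin 2) ℂ) ⊗ₖ ((1 : Matrix (Fin 2) (Fin 2) ℂ) ⊗ₖ P1) ⊗ₖ Sm N
      + (1 : Matrix (Fin 2) (Fin 2) ℂ) ⊗ₖ ((1 : Matrix (Fin 2) (Fin 2) ℂ) ⊗ₖ P0)
        ⊗ₖ (1 : Matrix (Fin N) (Fin N) ℂ))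
    * ctrlRY N θ2 P0 P1 * ctrlRY N θ1 P1 P0 * ctrlRY N θ0 P0 P0
    = RYm θ0 ⊗ₖ (P0 ⊗ₖ P0) ⊗ₖ 1 + RYm θ1 ⊗ₖ (P1 ⊗ₖ P0) ⊗ₖ Sp N
      + RYm θ2 ⊗ₖ (P0 ⊗ₖ P1) ⊗ₖ Sm N + 1 ⊗ₖ (P1 ⊗ₖ P1) ⊗ₖ 1 := by
  have h00 : (1 : Matrix (Fin 2 × Fin 2) (Fin 2 × Fin 2) ℂ) - P0 ⊗ₖ P0
      = P0 ⊗ₖ P1 + P1 ⊗ₖ P0 + P1 ⊗ₖ P1 := by rw [one_eq_sum_P_kronecker_P]; abel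
  have h10 : (1 : Matrix (Fin 2 × Fin 2) (Fin 2 × Fin 2) ℂ) - P1 ⊗ₖ P0
      = P0 ⊗ₖ P0 + P0 ⊗ₖ P1 + P1 ⊗ₖ P1 := by rw [one_eq_sum_P_kronecker_P]; abel
  have h01 : (1 : Matrix (Fin 2 × Fin 2) (Fin 2 × Fin 2) ℂ) - P0 ⊗ₖ P1
      = P0 ⊗ₖ P0 + P1 ⊗ₖ P0 + P1 ⊗ₖ P1 := by rw [one_eq_sum_P_kronecker_P]; abel
  simp only [ctrlRY, h00, h10, h01, Matrix.add_kronecker, Matrix.kronecker_add,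
    Matrix.add_mul, Matrix.mul_add, ← Matrix.mul_kronecker_mul, Matrix.one_mul, Matrix.mul_one,
    P0_mul_P0, P0_mul_P1, P1_mul_P0, P1_mul_P1, Matrix.zero_kronecker, Matrix.kronecker_zero,
    add_zero, zero_add, Sp_mul_Sm]
  abel

end Circuit

theorem stmt_5_general (N : ℕ) [NeZero N]
    (a0 a1 am1 : ℝ) (ha0 : a0 ∈ Set.Ioc (0 : ℝ) 2)
    (ha1 : a1 ∈ Set.Icc (-1 : ℝ) 1) (ham1 : am1 ∈ Set.Icc (-1 : ℝ) 1)
    (A : Matrix (Fin N) (Fin N) ℂ)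
    (hA : A = (a0 : ℂ) • (1 : Matrix (Fin N) (Fin N) ℂ) + (a1 : ℂ) • Sp N + (am1 : ℂ) • Sm N)
    (θ0 θ1 θ2 : ℝ)
    (htheta0 : θ0 = 2 * Real.arccos (a0 - 1))
    (htheta1 : θ1 = 2 * Real.arccos a1)
    (htheta2 : θ2 = 2 * Real.arccos am1)
    (R0 R1 R2 Cm Cp U :
      Matrix ((Fin 2 × (Fin 2 × Fin 2)) × Fin N) ((Fin 2 × (Fin 2 × Fin 2)) × Fin N) ℂ)
    (hR0 : R0 = RYm θ0 ⊗ₖ (P0 ⊗ₖ P0) ⊗ₖ (1 : Matrix (Fin N) (Fin N) ℂ)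
      + (1 : Matrix (Fin 2) (Fin 2) ℂ)
          ⊗ₖ ((1 : Matrix (Fin 2 × Fin 2) (Fin 2 × Fin 2) ℂ) - P0 ⊗ₖ P0)
          ⊗ₖ (1 : Matrix (Fin N) (Fin N) ℂ))
    (hR1 : R1 = RYm θ1 ⊗ₖ (P1 ⊗ₖ P0) ⊗ₖ (1 : Matrix (Fin N) (Fin N) ℂ)
      + (1 : Matrix (Fin 2) (Fin 2) ℂ)
          ⊗ₖ ((1 : Matrix (Fin 2 × Fin 2) (Fin 2 × Fin 2) ℂ) - P1 ⊗ₖ P0)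
          ⊗ₖ (1 : Matrix (Fin N) (Fin N) ℂ))
    (hR2 : R2 = RYm θ2 ⊗ₖ (P0 ⊗ₖ P1) ⊗ₖ (1 : Matrix (Fin N) (Fin N) ℂ)
      + (1 : Matrix (Fin 2) (Fin 2) ℂ)
          ⊗ₖ ((1 : Matrix (Fin 2 × Fin 2) (Fin 2 × Fin 2) ℂ) - P0 ⊗ₖ P1)
          ⊗ₖ (1 : Matrix (Fin N) (Fin N) ℂ))
    (hCm : Cm = (1 : Matrix (Fin 2) (Fin 2) ℂ)
          ⊗ₖ ((1 : Matrix (Fin 2) (Fin 2) ℂ) ⊗ₖ P1) ⊗ₖ Sm N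
      + (1 : Matrix (Fin 2) (Fin 2) ℂ)
          ⊗ₖ ((1 : Matrix (Fin 2) (Fin 2) ℂ) ⊗ₖ P0) ⊗ₖ (1 : Matrix (Fin N) (Fin N) ℂ))
    (hCp : Cp = (1 : Matrix (Fin 2) (Fin 2) ℂ)
          ⊗ₖ (P1 ⊗ₖ (1 : Matrix (Fin 2) (Fin 2) ℂ)) ⊗ₖ Sp N
      + (1 : Matrix (Fin 2) (Fin 2) ℂ)
          ⊗ₖ (P0 ⊗ₖ (1 : Matrix (Fin 2) (Fin 2) ℂ)) ⊗ₖ (1 : Matrix (Fin N) (Fin N) ℂ))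
    (hU : U = ((1 : Matrix (Fin 2) (Fin 2) ℂ) ⊗ₖ (Hg ⊗ₖ Hg) ⊗ₖ (1 : Matrix (Fin N) (Fin N) ℂ))
      * Cp * Cm * R2 * R1 * R0
      * ((1 : Matrix (Fin 2) (Fin 2) ℂ) ⊗ₖ (Hg ⊗ₖ Hg) ⊗ₖ (1 : Matrix (Fin N) (Fin N) ℂ))) :
    ∀ j k : Fin N, U ((0, (0, 0)), j) ((0, (0, 0)), k) = (1 / 4 : ℂ) * A j k := by
  intro j k
  have hcircuit : Cp * Cm * R2 * R1 * R0 = RYm θ0 ⊗ₖ (P0 ⊗ₖ P0) ⊗ₖ 1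
      + RYm θ1 ⊗ₖ (P1 ⊗ₖ P0) ⊗ₖ Sp N + RYm θ2 ⊗ₖ (P0 ⊗ₖ P1) ⊗ₖ Sm N + 1 ⊗ₖ (P1 ⊗ₖ P1) ⊗ₖ 1 := by
    subst hCp hCm hR0 hR1 hR2
    exact shifts_mul_ctrlRY_eq_sum_branches N θ0 θ1 θ2
  have hU' : U = ((1 : Matrix (Fin 2) (Fin 2) ℂ) ⊗ₖ (Hg ⊗ₖ Hg) ⊗ₖ (1 : Matrix (Fin N) (Fin N) ℂ))
      * (Cp * Cm * R2 * R1 * R0)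
      * ((1 : Matrix (Fin 2) (Fin 2) ℂ) ⊗ₖ (Hg ⊗ₖ Hg) ⊗ₖ (1 : Matrix (Fin N) (Fin N) ℂ)) := by
    rw [hU]; simp only [Matrix.mul_assoc]
  have hc0 := RYm_two_mul_arccos_zero_zero (x := a0 - 1) (by linarith [ha0.1]) (by linarith [ha0.2])
  have hc1 := RYm_two_mul_arccos_zero_zero ha1.1 ha1.2
  have hc2 := RYm_two_mul_arccos_zero_zero ham1.1 ham1.2
  subst hA htheta0 htheta1 htheta2
  simp only [hU', hcircuit, Matrix.mul_add, Matrix.add_mul, Matrix.add_apply,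
    kronecker_conj_kronecker_apply, Hg_mul_P0_mul_Hg_zero_zero, Hg_mul_P1_mul_Hg_zero_zero,
    hc0, hc1, hc2, Matrix.one_apply_eq, Matrix.smul_apply, smul_eq_mul]
  push_cast
  ring

theorem stmt_5 (n : ℕ) (hn : 1 ≤ n) (N : ℕ) (hN : N = 2 ^ n) [NeZero N]
    (a0 a1 am1 : ℝ) (ha0 : a0 ∈ Set.Ioc (0 : ℝ) 2)
    (ha1 : a1 ∈ Set.Icc (-1 : ℝ) 1) (ham1 : am1 ∈ Set.Icc (-1 : ℝ) 1)
    (A : Matrix (Fin N) (Fin N) ℂ)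
    (hA : A = (a0 : ℂ) • (1 : Matrix (Fin N) (Fin N) ℂ) + (a1 : ℂ) • Sp N + (am1 : ℂ) • Sm N)
    (θ0 θ1 θ2 : ℝ)
    (htheta0 : θ0 = 2 * Real.arccos (a0 - 1))
    (htheta1 : θ1 = 2 * Real.arccos a1)
    (htheta2 : θ2 = 2 * Real.arccos am1)
    (R0 R1 R2 Cm Cp U :
      Matrix ((Fin 2 × (Fin 2 × Fin 2)) × Fin N) ((Fin 2 × (Fin 2 × Fin 2)) × Fin N) ℂ)
    (hR0 : R0 = RYm θ0 ⊗ₖ (P0 ⊗ₖ P0) ⊗ₖ (1 : Matrix (Fin N) (Fin N) ℂ)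
      + (1 : Matrix (Fin 2) (Fin 2) ℂ)
          ⊗ₖ ((1 : Matrix (Fin 2 × Fin 2) (Fin 2 × Fin 2) ℂ) - P0 ⊗ₖ P0)
          ⊗ₖ (1 : Matrix (Fin N) (Fin N) ℂ))
    (hR1 : R1 = RYm θ1 ⊗ₖ (P1 ⊗ₖ P0) ⊗ₖ (1 : Matrix (Fin N) (Fin N) ℂ)
      + (1 : Matrix (Fin 2) (Fin 2) ℂ)
          ⊗ₖ ((1 : Matrix (Fin 2 × Fin 2) (Fin 2 × Fin 2) ℂ) - P1 ⊗ₖ P0)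
          ⊗ₖ (1 : Matrix (Fin N) (Fin N) ℂ))
    (hR2 : R2 = RYm θ2 ⊗ₖ (P0 ⊗ₖ P1) ⊗ₖ (1 : Matrix (Fin N) (Fin N) ℂ)
      + (1 : Matrix (Fin 2) (Fin 2) ℂ)
          ⊗ₖ ((1 : Matrix (Fin 2 × Fin 2) (Fin 2 × Fin 2) ℂ) - P0 ⊗ₖ P1)
          ⊗ₖ (1 : Matrix (Fin N) (Fin N) ℂ))
    (hCm : Cm = (1 : Matrix (Fin 2) (Fin 2) ℂ)
          ⊗ₖ ((1 : Matrix (Fin 2) (Fin 2) ℂ) ⊗ₖ P1) ⊗ₖ Sm N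
      + (1 : Matrix (Fin 2) (Fin 2) ℂ)
          ⊗ₖ ((1 : Matrix (Fin 2) (Fin 2) ℂ) ⊗ₖ P0) ⊗ₖ (1 : Matrix (Fin N) (Fin N) ℂ))
    (hCp : Cp = (1 : Matrix (Fin 2) (Fin 2) ℂ)
          ⊗ₖ (P1 ⊗ₖ (1 : Matrix (Fin 2) (Fin 2) ℂ)) ⊗ₖ Sp N
      + (1 : Matrix (Fin 2) (Fin 2) ℂ)
          ⊗ₖ (P0 ⊗ₖ (1 : Matrix (Fin 2) (Fin 2) ℂ)) ⊗ₖ (1 : Matrix (Fin N) (Fin N) ℂ))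
    (hU : U = ((1 : Matrix (Fin 2) (Fin 2) ℂ) ⊗ₖ (Hg ⊗ₖ Hg) ⊗ₖ (1 : Matrix (Fin N) (Fin N) ℂ))
      * Cp * Cm * R2 * R1 * R0
      * ((1 : Matrix (Fin 2) (Fin 2) ℂ) ⊗ₖ (Hg ⊗ₖ Hg) ⊗ₖ (1 : Matrix (Fin N) (Fin N) ℂ))) :
    ∀ j k : Fin N, U ((0, (0, 0)), j) ((0, (0, 0)), k) = (1 / 4 : ℂ) * A j k :=
  stmt_5_general N a0 a1 am1 ha0 ha1 ham1 A hA θ0 θ1 θ2 htheta0 htheta1 htheta2 R0 R1 R2 Cm Cp U hR0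
    hR1 hR2 hCm hCp hU
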